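/- Let r ≥ 2, h a positive integer, and x_0, ..., x_{r-1}, x_r nonnegative integers each with base-h digits x_{i,j} < h/r for j = 0, ..., t. If x_0 + x_1 + ... + x_{r-1} = r·x_r, then for every digit position j, x_{0,j} + x_{1,j} + ... + x_{r-1,j} = r·x_{r,j}. -/

import Mathlib

/-!
Since every digit is below `h / r`, the digitwise sums `∑ i < r, X i j` and the digitwise
multiples `r * X r j` are again digits below `h`. The hypothesis says that these two digit
strings have the same base-`h` value, so they agree by uniqueness of base-`h` expansions.
-/

open Finset

/-- Comparing remainders and quotients modulo `h` peels off the lowest digit. -/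
theorem eq_of_sum_range_mul_pow_eq {h : ℕ} :
    ∀ {n : ℕ} {a b : ℕ → ℕ}, (∀ j < n, a j < h) → (∀ j < n, b j < h) →
      ∑ j ∈ range n, a j * h ^ j = ∑ j ∈ range n, b j * h ^ j → ∀ j < n, a j = b j
  | 0, _, _, _, _, _, j, hj => absurd hj j.not_lt_zero
  | n + 1, a, b, ha, hb, hab, j, hj => by
    have shift (c : ℕ → ℕ) : ∑ j ∈ range (n + 1), c j * h ^ j
        = c 0 + h * ∑ j ∈ range n, c (j + 1) * h ^ j := by
      rw [sum_range_succ', mul_sum, add_comm, pow_zero, mul_one]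
      exact congrArg _ (sum_congr rfl fun j _ => by ring)
    have ha0 := ha 0 n.succ_pos
    have hpos : 0 < h := pos_of_gt ha0
    obtain ⟨hquot_a, hrem_a⟩ := (Nat.div_mod_unique hpos).2 ⟨(shift a).symm, ha0⟩
    obtain ⟨hquot_b, hrem_b⟩ := (Nat.div_mod_unique hpos).2 ⟨(shift b).symm, hb 0 n.succ_pos⟩
    rw [hab] at hquot_a hrem_a
    cases j with
    | zero => exact hrem_a.symm.trans hrem_b
    | succ k =>
      exact eq_of_sum_range_mul_pow_eq (fun j hj => ha (j + 1) (by omega))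
        (fun j hj => hb (j + 1) (by omega)) (hquot_a.symm.trans hquot_b) k (by omega)

theorem sum_lt_of_card_mul_lt {ι : Type*} (s : Finset ι) (f : ι → ℕ) {h : ℕ} (hpos : 0 < h)
    (hf : ∀ i ∈ s, #s * f i < h) : ∑ i ∈ s, f i < h := by
  rcases s.eq_empty_or_nonempty with rfl | hs
  · simpa using hpos
  · refine Nat.lt_of_mul_lt_mul_left (a := #s) ?_
    calc #s * ∑ i ∈ s, f i = ∑ i ∈ s, #s * f i := mul_sum _ _ _
      _ < ∑ _i ∈ s, h := sum_lt_sum_of_nonempty hs hf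
      _ = #s * h := by rw [sum_const, smul_eq_mul]

theorem statement2_general (r h t : ℕ)
    (x : ℕ → ℕ) (X : ℕ → ℕ → ℕ)
    (hrepr : ∀ i ≤ r, x i = ∑ j ∈ Finset.range (t + 1), X i j * h ^ j)
    (hdig : ∀ i ≤ r, ∀ j ≤ t, r * X i j < h)
    (hsum : (∑ i ∈ Finset.range r, x i) = r * x r) :
    ∀ j ≤ t, (∑ i ∈ Finset.range r, X i j) = r * X r j := by
  have hsum_lt : ∀ j < t + 1, ∑ i ∈ range r, X i j < h := fun j hj =>
    sum_lt_of_card_mul_lt _ _ (pos_of_gt (hdig r le_rfl j (by omega)))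
      fun i hi => by
        rw [card_range]
        exact hdig i (mem_range.1 hi).le j (by omega)
  have hvalue : ∑ j ∈ range (t + 1), (∑ i ∈ range r, X i j) * h ^ j
      = ∑ j ∈ range (t + 1), (r * X r j) * h ^ j := by
    calc _ = ∑ i ∈ range r, x i := by
          simp only [sum_mul]
          rw [sum_comm]
          exact sum_congr rfl fun i hi => (hrepr i (mem_range.1 hi).le).symm
      _ = r * x r := hsum
      _ = _ := by
          rw [hrepr r le_rfl, mul_sum]
          simp only [mul_assoc]
  intro j hj
  exact eq_of_sum_range_mul_pow_eq hsum_lt (fun j hj => hdig r le_rfl j (by omega)) hvalue j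
    (by omega)

/-- No-carry lemma: if `x₀,…,x_r` have base-`h` digits `X i j < h/r` for `j ≤ t` and
`x₀ + ⋯ + x_{r-1} = r·x_r`, then the same relation holds digitwise. -/
theorem statement2 (r h t : ℕ) (hr : 2 ≤ r) (hh : 1 ≤ h)
    (x : ℕ → ℕ) (X : ℕ → ℕ → ℕ)
    (hrepr : ∀ i ≤ r, x i = ∑ j ∈ Finset.range (t + 1), X i j * h ^ j)
    (hdig : ∀ i ≤ r, ∀ j ≤ t, r * X i j < h)
    (hsum : (∑ i ∈ Finset.range r, x i) = r * x r) :
    ∀ j ≤ t, (∑ i ∈ Finset.range r, X i j) = r * X r j :=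
  statement2_general r h t x X hrepr hdig hsum
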